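/- arXiv:1008.2435 — 2 statements merged into one kernel-verified Lean document; each statement's English description precedes it below -/
import Mathlib

section
/- Let λ > 0 be a real number and 𝔤_λ the associated 4-dimensional oscillator Lie algebra (n = 1). Then: (1) a linear map ξ : 𝔤_λ → ⋀²𝔤_λ is a Lie bialgebra structure on 𝔤_λ if and only if there exist a, α ∈ ℝ and u₀ ∈ S such that ξ(u) = α ad_u†(e₁∧ě₁) + e₀ ∧ ((J_a + ad_{u₀})(u)) for all u ∈ 𝔤_λ; (2) a bivector r ∈ ⋀²𝔤_λ is a solution of the generalized classical Yang–Baxter equation if and only if r = e₀∧u + α e₁∧ě₁ for some α ∈ ℝ and u ∈ 𝔤_λ; (3) a bivector r ∈ ⋀²𝔤_λ is a solution of the classical Yang–Baxter equation if and only if r = e₀∧u for some u ∈ 𝔤_λ. -/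
/-!
Every bivector-valued 1-cocycle `ξ` of `𝔤_λ` is a coboundary `u ↦ ad_u† r`. Indeed `ξ(e₀)` is an
invariant bivector, hence zero, and the cocycle identities on the pairs `(e₋₁, e₁)`, `(e₋₁, ě₁)`,
`(e₁, ě₁)` are a linear system in the coordinates of `ξ(e₋₁), ξ(e₁), ξ(ě₁)` whose solutions are
exactly the coboundaries. For a coboundary the Jacobiator of the dual bracket at `u` is
`-½ ad_u [r,r]`, so `ad† r` is a Lie bialgebra iff `r` solves the generalized CYBE.
Evaluating `[r,r]` at `(e₋₁*, e₁*, ě₁*)` gives `2λ(b² + c²)`, where `b, c` are the coordinates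
of `r` on `e₋₁∧e₁, e₋₁∧ě₁`; since `ad*_{e₁} e₀* = ě₁*`, this value is, up to sign,
`ad_{e₁}[r,r]` at `(e₋₁*, e₀*, e₁*)`, so it vanishes and leaves `r = e₀∧u + c e₁∧ě₁`. Then
`[r,r](e₀*, e₁*, ě₁*) = 2c²` settles the CYBE, and `J_a = (a/λ) ad_{e₋₁}` turns `ad† r` into the
stated normal form.
-/

open Module LinearMap

noncomputable section

/-- Index type for the basis of an oscillator Lie algebra:
`Sum.inl 0 ↦ e₋₁`, `Sum.inl 1 ↦ e₀`, `Sum.inr (Sum.inl i) ↦ eᵢ`,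
`Sum.inr (Sum.inr i) ↦ ěᵢ`. -/
abbrev OscIdx (n : ℕ) := Fin 2 ⊕ (Fin n ⊕ Fin n)

/-- The oscillator Lie algebra `𝔤_λ`: a real Lie algebra `L` together with a basis
`{e₋₁, e₀, e₁, …, eₙ, ě₁, …, ěₙ}` whose nonzero brackets on basis vectors are
`[e₋₁, eⱼ] = λⱼ ěⱼ`, `[e₋₁, ěⱼ] = −λⱼ eⱼ`, `[eⱼ, ěⱼ] = e₀` (all other brackets of the
basis vectors vanish or follow by antisymmetry; in particular `e₀` is central). -/
structure OscAlg (n : ℕ) (lam : Fin n → ℝ) (L : Type) [LieRing L] [LieAlgebra ℝ L] where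
  basis : Basis (OscIdx n) ℝ L
  bracket_em_e : ∀ j, ⁅basis (Sum.inl 0), basis (Sum.inr (Sum.inl j))⁆
      = lam j • basis (Sum.inr (Sum.inr j))
  bracket_em_f : ∀ j, ⁅basis (Sum.inl 0), basis (Sum.inr (Sum.inr j))⁆
      = -lam j • basis (Sum.inr (Sum.inl j))
  bracket_e_f : ∀ i j, ⁅basis (Sum.inr (Sum.inl i)), basis (Sum.inr (Sum.inr j))⁆
      = if i = j then basis (Sum.inl 1) else 0
  bracket_e_e : ∀ i j, ⁅basis (Sum.inr (Sum.inl i)), basis (Sum.inr (Sum.inl j))⁆ = 0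
  bracket_f_f : ∀ i j, ⁅basis (Sum.inr (Sum.inr i)), basis (Sum.inr (Sum.inr j))⁆ = 0
  bracket_e0 : ∀ x : L, ⁅basis (Sum.inl 1), x⁆ = 0

/-- `0 < λ₁ ≤ … ≤ λₙ`: the standing assumption on the parameters of an oscillator
Lie algebra. -/
def OscParam {n : ℕ} (lam : Fin n → ℝ) : Prop := (∀ i, 0 < lam i) ∧ Monotone lam

/-- Genericity: `0 < λ₁ < … < λₙ` and `λ_k ≠ λ_i + λ_j` for all `i < j < k`. -/
def IsGeneric {n : ℕ} (lam : Fin n → ℝ) : Prop :=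
  (∀ i, 0 < lam i) ∧ StrictMono lam ∧
    ∀ i j k : Fin n, i < j → j < k → lam k ≠ lam i + lam j

namespace OscAlg

variable {n : ℕ} {lam : Fin n → ℝ} {L : Type} [LieRing L] [LieAlgebra ℝ L]

/-- `e₋₁`. -/
def em (B : OscAlg n lam L) : L := B.basis (Sum.inl 0)
/-- `e₀`. -/
def e0 (B : OscAlg n lam L) : L := B.basis (Sum.inl 1)
/-- `eᵢ`. -/
def e (B : OscAlg n lam L) (i : Fin n) : L := B.basis (Sum.inr (Sum.inl i))
/-- `ěᵢ`. -/
def f (B : OscAlg n lam L) (i : Fin n) : L := B.basis (Sum.inr (Sum.inr i))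
/-- `e₋₁*`, an element of the dual basis. -/
def em' (B : OscAlg n lam L) : Dual ℝ L := B.basis.coord (Sum.inl 0)
/-- `e₀*`. -/
def e0' (B : OscAlg n lam L) : Dual ℝ L := B.basis.coord (Sum.inl 1)
/-- `eᵢ*`. -/
def e' (B : OscAlg n lam L) (i : Fin n) : Dual ℝ L := B.basis.coord (Sum.inr (Sum.inl i))
/-- `ěᵢ*`. -/
def f' (B : OscAlg n lam L) (i : Fin n) : Dual ℝ L := B.basis.coord (Sum.inr (Sum.inr i))

/-- The subspace `S` spanned by the `eᵢ, ěᵢ`. -/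
def S (B : OscAlg n lam L) : Submodule ℝ L :=
  Submodule.span ℝ (Set.range B.e ∪ Set.range B.f)

/-- The `2`-form `ω` on `𝔤_λ`, viewed as a linear map `𝔤_λ → 𝔤_λ*`:
`ω(e₋₁,·) = ω(e₀,·) = 0`, `ω(eᵢ,eⱼ) = ω(ěᵢ,ěⱼ) = 0`, `ω(eᵢ,ěⱼ) = δᵢⱼ`. -/
def om (B : OscAlg n lam L) : L →ₗ[ℝ] Dual ℝ L :=
  ∑ i : Fin n, ((B.e' i).smulRight (B.f' i) - (B.f' i).smulRight (B.e' i))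

/-- The derivation `J_a` of `𝔤_λ` given by `J_a(e₋₁) = J_a(e₀) = 0`, `J_a(eᵢ) = aᵢ ěᵢ`,
`J_a(ěᵢ) = −aᵢ eᵢ`. -/
def Ja (B : OscAlg n lam L) (a : Fin n → ℝ) : L →ₗ[ℝ] L :=
  B.basis.constr ℝ (Sum.elim (fun _ => (0 : L))
    (Sum.elim (fun i => a i • B.f i) (fun i => -(a i) • B.e i)))

end OscAlg

section Bivectors

variable {L : Type} [LieRing L] [LieAlgebra ℝ L]

/-- `x ∧ y`, viewed as the linear map `𝔤* → 𝔤`, `α ↦ α(x) y − α(y) x`; this corresponds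
to the skew-symmetric bilinear form `(α,β) ↦ α(x)β(y) − α(y)β(x)` on `𝔤*`. -/
def wedge (x y : L) : Dual ℝ L →ₗ[ℝ] L :=
  (Module.Dual.eval ℝ L x).smulRight y - (Module.Dual.eval ℝ L y).smulRight x

/-- A bivector `r ∈ ⋀²𝔤`, identified with the linear map `r_# : 𝔤* → 𝔤` of the
corresponding skew-symmetric bilinear form on `𝔤*` (so `r(α,β) = β(r_#(α))`). -/
def IsBivector (r : Dual ℝ L →ₗ[ℝ] L) : Prop := ∀ α β : Dual ℝ L, α (r β) = - β (r α)

/-- The coadjoint action `ad*_u α := α ∘ ad_u`. -/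
def coad (u : L) : Dual ℝ L →ₗ[ℝ] Dual ℝ L := (LieAlgebra.ad ℝ L u).dualMap

/-- `J† r` for an endomorphism `J` of `𝔤`; in terms of bilinear forms,
`(J† r)(α,β) = r(α∘J, β) + r(α, β∘J)`. -/
def dag (J : L →ₗ[ℝ] L) (r : Dual ℝ L →ₗ[ℝ] L) : Dual ℝ L →ₗ[ℝ] L :=
  r ∘ₗ J.dualMap + J ∘ₗ r

/-- The adjoint action `ad_u† r` of `u ∈ 𝔤` on bivectors:
`(ad_u† r)(α,β) = r(ad*_u α, β) + r(α, ad*_u β)`. -/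
def adDag (u : L) (r : Dual ℝ L →ₗ[ℝ] L) : Dual ℝ L →ₗ[ℝ] L :=
  dag (LieAlgebra.ad ℝ L u) r

/-- The Schouten bracket `[r,r]` of a bivector with itself:
`[r,r](α,β,γ) = 2α([r_#β, r_#γ]) + 2β([r_#γ, r_#α]) + 2γ([r_#α, r_#β])`. -/
def schouten (r : Dual ℝ L →ₗ[ℝ] L) (α β γ : Dual ℝ L) : ℝ :=
  2 * α ⁅r β, r γ⁆ + 2 * β ⁅r γ, r α⁆ + 2 * γ ⁅r α, r β⁆

/-- `r` is a solution of the classical Yang–Baxter equation: `[r,r] = 0`. -/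
def IsCYBE (r : Dual ℝ L →ₗ[ℝ] L) : Prop := ∀ α β γ : Dual ℝ L, schouten r α β γ = 0

/-- `r` is a solution of the generalized classical Yang–Baxter equation:
`ad_u [r,r] = 0` for all `u`. -/
def IsGCYBE (r : Dual ℝ L →ₗ[ℝ] L) : Prop :=
  ∀ (u : L) (α β γ : Dual ℝ L),
    schouten r (coad u α) β γ + schouten r α (coad u β) γ + schouten r α β (coad u γ) = 0

/-- A derivation of the Lie algebra `L`. -/
def IsDerivation (J : L →ₗ[ℝ] L) : Prop := ∀ x y : L, J ⁅x, y⁆ = ⁅J x, y⁆ + ⁅x, J y⁆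

/-- The 1-cocycle condition for `ξ : 𝔤 → ⋀²𝔤` with respect to the adjoint action:
`ξ([u,v]) = ad_u† ξ(v) − ad_v† ξ(u)`. -/
def IsCocycle (ξ : L →ₗ[ℝ] (Dual ℝ L →ₗ[ℝ] L)) : Prop :=
  ∀ u v : L, ξ ⁅u, v⁆ = adDag u (ξ v) - adDag v (ξ u)

/-- The dual bracket `[α,β]*` associated to `ξ : 𝔤 → ⋀²𝔤`:
`[α,β]*(u) = ξ(u)(α,β)`. -/
def dualBr (ξ : L →ₗ[ℝ] (Dual ℝ L →ₗ[ℝ] L)) (α β : Dual ℝ L) : Dual ℝ L :=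
  (β : L →ₗ[ℝ] ℝ) ∘ₗ (ξ.flip α)

/-- `ξ : 𝔤 → ⋀²𝔤` is a Lie bialgebra structure: `ξ` takes values in bivectors, is a
1-cocycle, and the dual bracket satisfies the Jacobi identity. -/
def IsBialgebra (ξ : L →ₗ[ℝ] (Dual ℝ L →ₗ[ℝ] L)) : Prop :=
  (∀ (u : L) (α β : Dual ℝ L), α (ξ u β) = - β (ξ u α)) ∧ IsCocycle ξ ∧
  ∀ α β γ : Dual ℝ L,
    dualBr ξ (dualBr ξ α β) γ + dualBr ξ (dualBr ξ β γ) α + dualBr ξ (dualBr ξ γ α) β = 0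

end Bivectors

namespace OscAlg

variable {n : ℕ} {lam : Fin n → ℝ} {L : Type} [LieRing L] [LieAlgebra ℝ L]

/-- Membership in `⋀²S`: a bivector `r` with `r_#(e₋₁*) = r_#(e₀*) = 0` and
`Im r_# ⊆ S`. -/
def InW2S (B : OscAlg n lam L) (r : Dual ℝ L →ₗ[ℝ] L) : Prop :=
  IsBivector r ∧ r B.em' = 0 ∧ r B.e0' = 0 ∧ ∀ α : Dual ℝ L, r α ∈ B.S

/-- `ω_{r₁,r₂}(α,β) = (1/2)(ω(r₁_#(α), r₂_#(β)) + ω(r₂_#(α), r₁_#(β)))`. -/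
def omPair (B : OscAlg n lam L) (r₁ r₂ : Dual ℝ L →ₗ[ℝ] L) (α β : Dual ℝ L) : ℝ :=
  (1/2) * (B.om (r₁ α) (r₂ β) + B.om (r₂ α) (r₁ β))

end OscAlg

section Coboundary

variable {L : Type} [LieRing L] [LieAlgebra ℝ L]

@[simp] lemma wedge_apply (p q : L) (α : Dual ℝ L) : wedge p q α = α p • q - α q • p := by
  simp [wedge, Module.Dual.eval]

lemma coad_apply (u : L) (α : Dual ℝ L) (v : L) : coad u α v = α ⁅u, v⁆ := rfl

lemma coad_add (u v : L) : coad (u + v) = coad u + coad v := by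
  ext α w; simp [coad_apply, add_lie]

lemma coad_smul (c : ℝ) (u : L) : coad (c • u) = c • coad u := by
  ext α w; simp [coad_apply, smul_lie]

lemma coad_lie (u v : L) (α : Dual ℝ L) :
    coad ⁅u, v⁆ α = coad v (coad u α) - coad u (coad v α) := by
  ext w
  simp only [coad_apply, LinearMap.sub_apply, leibniz_lie u v w, map_add]
  rw [← lie_skew v ⁅u, w⁆, map_neg]
  ring

lemma adDag_apply (u : L) (r : Dual ℝ L →ₗ[ℝ] L) (α : Dual ℝ L) :
    adDag u r α = r (coad u α) + ⁅u, r α⁆ := by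
  simp [adDag, dag, coad]

lemma dualBr_apply (ξ : L →ₗ[ℝ] (Dual ℝ L →ₗ[ℝ] L)) (α β : Dual ℝ L) (v : L) :
    dualBr ξ α β v = β (ξ v α) := rfl

def coboundary (r : Dual ℝ L →ₗ[ℝ] L) : L →ₗ[ℝ] Dual ℝ L →ₗ[ℝ] L where
  toFun u := adDag u r
  map_add' u v := by ext α; simp [adDag_apply, coad_add, add_lie]; abel
  map_smul' c u := by ext α; simp [adDag_apply, coad_smul, smul_lie]

@[simp] lemma coboundary_apply (r : Dual ℝ L →ₗ[ℝ] L) (u : L) :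
    coboundary r u = adDag u r := rfl

lemma adDag_lie (u v : L) (r : Dual ℝ L →ₗ[ℝ] L) :
    adDag ⁅u, v⁆ r = adDag u (adDag v r) - adDag v (adDag u r) := by
  ext α
  simp only [adDag_apply, LinearMap.sub_apply, map_sub, coad_lie, lie_add,
    leibniz_lie u v (r α)]
  abel

lemma isCocycle_coboundary (r : Dual ℝ L →ₗ[ℝ] L) : IsCocycle (coboundary r) :=
  fun u v => adDag_lie u v r

lemma adDag_add (u : L) (r s : Dual ℝ L →ₗ[ℝ] L) :
    adDag u (r + s) = adDag u r + adDag u s := by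
  ext α; simp [adDag_apply]; abel

lemma adDag_smul (u : L) (t : ℝ) (r : Dual ℝ L →ₗ[ℝ] L) :
    adDag u (t • r) = t • adDag u r := by
  ext α; simp [adDag_apply]

lemma adDag_wedge (u p q : L) : adDag u (wedge p q) = wedge ⁅u, p⁆ q + wedge p ⁅u, q⁆ := by
  ext α
  simp only [adDag_apply, LinearMap.add_apply, wedge_apply, coad_apply, lie_sub, lie_smul]
  abel

lemma isBivector_wedge (p q : L) : IsBivector (wedge p q) := by
  intro α β; simp; ring

variable {r : Dual ℝ L →ₗ[ℝ] L}

lemma IsBivector.add {s : Dual ℝ L →ₗ[ℝ] L} (hr : IsBivector r) (hs : IsBivector s) :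
    IsBivector (r + s) := by
  intro α β; simp [hr α, hs α]; ring

lemma IsBivector.smul (hr : IsBivector r) (t : ℝ) : IsBivector (t • r) := by
  intro α β; simp [hr α]

lemma IsBivector.adDag (hr : IsBivector r) (u : L) : IsBivector (adDag u r) := by
  intro α β
  simp only [adDag_apply, map_add, hr α, hr β, coad_apply]
  ring

lemma IsBivector.dualBr_coboundary_apply (hr : IsBivector r) (α β : Dual ℝ L) (u : L) :
    dualBr (coboundary r) α β u = β ⁅u, r α⁆ - α ⁅u, r β⁆ := by
  rw [dualBr_apply, coboundary_apply, adDag_apply, map_add, hr, coad_apply]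
  ring

lemma IsBivector.jacobiator_coboundary (hr : IsBivector r) (α β γ : Dual ℝ L) (u : L) :
    (dualBr (coboundary r) (dualBr (coboundary r) α β) γ
      + dualBr (coboundary r) (dualBr (coboundary r) β γ) α
      + dualBr (coboundary r) (dualBr (coboundary r) γ α) β) u
    = -(1 / 2) * (schouten r (coad u α) β γ + schouten r α (coad u β) γ
      + schouten r α β (coad u γ)) := by
  have key : ∀ φ ψ χ : Dual ℝ L, χ ⁅u, r (dualBr (coboundary r) φ ψ)⁆
      = φ ⁅r (coad u χ), r ψ⁆ - ψ ⁅r (coad u χ), r φ⁆ := by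
    intro φ ψ χ
    rw [← coad_apply, hr, hr.dualBr_coboundary_apply]
    ring
  simp only [LinearMap.add_apply, hr.dualBr_coboundary_apply, key, schouten]
  -- what remains beyond the Schouten terms cancels by the Jacobi identity
  simp only [coad_apply, leibniz_lie u (r _) (r _), map_add,
    ← lie_skew (r β) ⁅u, r γ⁆, ← lie_skew (r γ) ⁅u, r α⁆, ← lie_skew (r α) ⁅u, r β⁆,
    ← lie_skew (r γ) (r (coad u α)), ← lie_skew (r α) (r (coad u β)),
    ← lie_skew (r β) (r (coad u γ)), map_neg]
  ring

theorem IsBivector.isBialgebra_coboundary_iff (hr : IsBivector r) :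
    IsBialgebra (coboundary r) ↔ IsGCYBE r := by
  constructor
  · rintro ⟨-, -, hjac⟩ u α β γ
    have h := congr($(hjac α β γ) u)
    rw [hr.jacobiator_coboundary, LinearMap.zero_apply] at h
    linarith
  · intro hg
    refine ⟨fun u => hr.adDag u, isCocycle_coboundary r, fun α β γ => ?_⟩
    ext u
    rw [hr.jacobiator_coboundary, hg, LinearMap.zero_apply, mul_zero]

lemma isCYBE_wedge_of_forall_lie_eq_zero {z : L} (hz : ∀ v : L, ⁅z, v⁆ = 0) (u : L) :
    IsCYBE (wedge z u) := by
  have hz' : ∀ v, ⁅v, z⁆ = 0 := fun v => by rw [← lie_skew, hz, neg_zero]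
  intro α β γ
  simp [schouten, lie_sub, sub_lie, hz, hz']

end Coboundary

namespace OscAlg

variable {l : ℝ} {L : Type} [LieRing L] [LieAlgebra ℝ L]

section

variable (B : OscAlg 1 (fun _ => l) L)

@[simp] lemma em'_em : B.em' B.em = 1 := by simp [em', em]
@[simp] lemma em'_e0 : B.em' B.e0 = 0 := by simp [em', e0]
@[simp] lemma em'_e : B.em' (B.e 0) = 0 := by simp [em', e]
@[simp] lemma em'_f : B.em' (B.f 0) = 0 := by simp [em', f]
@[simp] lemma e0'_em : B.e0' B.em = 0 := by simp [e0', em]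
@[simp] lemma e0'_e0 : B.e0' B.e0 = 1 := by simp [e0', e0]
@[simp] lemma e0'_e : B.e0' (B.e 0) = 0 := by simp [e0', e]
@[simp] lemma e0'_f : B.e0' (B.f 0) = 0 := by simp [e0', f]
@[simp] lemma e'_em : B.e' 0 B.em = 0 := by simp [e', em]
@[simp] lemma e'_e0 : B.e' 0 B.e0 = 0 := by simp [e', e0]
@[simp] lemma e'_e : B.e' 0 (B.e 0) = 1 := by simp [e', e]
@[simp] lemma e'_f : B.e' 0 (B.f 0) = 0 := by simp [e', f]
@[simp] lemma f'_em : B.f' 0 B.em = 0 := by simp [f', em]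
@[simp] lemma f'_e0 : B.f' 0 B.e0 = 0 := by simp [f', e0]
@[simp] lemma f'_e : B.f' 0 (B.e 0) = 0 := by simp [f', e]
@[simp] lemma f'_f : B.f' 0 (B.f 0) = 1 := by simp [f', f]

@[simp] lemma e0_lie (v : L) : ⁅B.e0, v⁆ = 0 := B.bracket_e0 v
@[simp] lemma lie_e0 (v : L) : ⁅v, B.e0⁆ = 0 := by rw [← lie_skew, e0_lie, neg_zero]
@[simp] lemma em_lie_e : ⁅B.em, B.e 0⁆ = l • B.f 0 := B.bracket_em_e 0
@[simp] lemma em_lie_f : ⁅B.em, B.f 0⁆ = -l • B.e 0 := B.bracket_em_f 0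
@[simp] lemma e_lie_f : ⁅B.e 0, B.f 0⁆ = B.e0 := by simpa [e, f, e0] using B.bracket_e_f 0 0
@[simp] lemma e_lie_em : ⁅B.e 0, B.em⁆ = -(l • B.f 0) := by rw [← lie_skew, em_lie_e]
@[simp] lemma f_lie_em : ⁅B.f 0, B.em⁆ = l • B.e 0 := by rw [← lie_skew, em_lie_f]; simp
@[simp] lemma f_lie_e : ⁅B.f 0, B.e 0⁆ = -B.e0 := by rw [← lie_skew, e_lie_f]

lemma eq_sum_coord (u : L) :
    u = B.em' u • B.em + B.e0' u • B.e0 + B.e' 0 u • B.e 0 + B.f' 0 u • B.f 0 := by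
  conv_lhs => rw [← B.basis.sum_repr u]
  rw [Fintype.sum_sum_type, Fintype.sum_sum_type, Fin.sum_univ_two, Fin.sum_univ_one,
    Fin.sum_univ_one]
  simp [em', e0', e', f', em, e0, e, f, add_assoc]

lemma ext_coord {u v : L} (h₁ : B.em' u = B.em' v) (h₂ : B.e0' u = B.e0' v)
    (h₃ : B.e' 0 u = B.e' 0 v) (h₄ : B.f' 0 u = B.f' 0 v) : u = v := by
  rw [B.eq_sum_coord u, B.eq_sum_coord v, h₁, h₂, h₃, h₄]

lemma dual_eq_sum (α : Dual ℝ L) :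
    α = α B.em • B.em' + α B.e0 • B.e0' + α (B.e 0) • B.e' 0 + α (B.f 0) • B.f' 0 := by
  ext u
  conv_lhs => rw [B.eq_sum_coord u]
  simp [mul_comm]

lemma ext_dual {V : Type} [AddCommGroup V] [Module ℝ V] {r s : Dual ℝ L →ₗ[ℝ] V}
    (h₁ : r B.em' = s B.em') (h₂ : r B.e0' = s B.e0') (h₃ : r (B.e' 0) = s (B.e' 0))
    (h₄ : r (B.f' 0) = s (B.f' 0)) : r = s := by
  ext α
  rw [B.dual_eq_sum α]
  simp [h₁, h₂, h₃, h₄]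

lemma ext_basis {V : Type} [AddCommGroup V] [Module ℝ V] {φ ψ : L →ₗ[ℝ] V}
    (h₁ : φ B.em = ψ B.em) (h₂ : φ B.e0 = ψ B.e0) (h₃ : φ (B.e 0) = ψ (B.e 0))
    (h₄ : φ (B.f 0) = ψ (B.f 0)) : φ = ψ := by
  ext u
  rw [B.eq_sum_coord u]
  simp [h₁, h₂, h₃, h₄]

@[simp] lemma em'_lie (u v : L) : B.em' ⁅u, v⁆ = 0 := by
  rw [B.eq_sum_coord u, B.eq_sum_coord v]
  simp [lie_add, add_lie, lie_smul, smul_lie]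

@[simp] lemma e0'_lie (u v : L) :
    B.e0' ⁅u, v⁆ = B.e' 0 u * B.f' 0 v - B.f' 0 u * B.e' 0 v := by
  rw [B.eq_sum_coord u, B.eq_sum_coord v]
  simp [lie_add, add_lie, lie_smul, smul_lie]
  ring

@[simp] lemma e'_lie (u v : L) :
    B.e' 0 ⁅u, v⁆ = l * (B.f' 0 u * B.em' v - B.em' u * B.f' 0 v) := by
  rw [B.eq_sum_coord u, B.eq_sum_coord v]
  simp [lie_add, add_lie, lie_smul, smul_lie]
  ring

@[simp] lemma f'_lie (u v : L) :
    B.f' 0 ⁅u, v⁆ = l * (B.em' u * B.e' 0 v - B.e' 0 u * B.em' v) := by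
  rw [B.eq_sum_coord u, B.eq_sum_coord v]
  simp [lie_add, add_lie, lie_smul, smul_lie]
  ring

@[simp] lemma coad_e0 : coad B.e0 = 0 := by ext α v; simp [coad_apply]
@[simp] lemma coad_em_em' : coad B.em B.em' = 0 := by ext v; simp [coad_apply]
@[simp] lemma coad_em_e0' : coad B.em B.e0' = 0 := by ext v; simp [coad_apply]
@[simp] lemma coad_em_e' : coad B.em (B.e' 0) = -l • B.f' 0 := by ext v; simp [coad_apply]
@[simp] lemma coad_em_f' : coad B.em (B.f' 0) = l • B.e' 0 := by ext v; simp [coad_apply]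
@[simp] lemma coad_e_em' : coad (B.e 0) B.em' = 0 := by ext v; simp [coad_apply]
@[simp] lemma coad_e_e0' : coad (B.e 0) B.e0' = B.f' 0 := by ext v; simp [coad_apply]
@[simp] lemma coad_e_e' : coad (B.e 0) (B.e' 0) = 0 := by ext v; simp [coad_apply]
@[simp] lemma coad_e_f' : coad (B.e 0) (B.f' 0) = -l • B.em' := by ext v; simp [coad_apply]
@[simp] lemma coad_f_em' : coad (B.f 0) B.em' = 0 := by ext v; simp [coad_apply]
@[simp] lemma coad_f_e0' : coad (B.f 0) B.e0' = -B.e' 0 := by ext v; simp [coad_apply]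
@[simp] lemma coad_f_e' : coad (B.f 0) (B.e' 0) = l • B.em' := by ext v; simp [coad_apply]
@[simp] lemma coad_f_f' : coad (B.f 0) (B.f' 0) = 0 := by ext v; simp [coad_apply]

lemma apply_lie (α : Dual ℝ L) (u v : L) :
    α ⁅u, v⁆ = α B.e0 * (B.e' 0 u * B.f' 0 v - B.f' 0 u * B.e' 0 v)
      + α (B.e 0) * (l * (B.f' 0 u * B.em' v - B.em' u * B.f' 0 v))
      + α (B.f 0) * (l * (B.em' u * B.e' 0 v - B.e' 0 u * B.em' v)) := by
  conv_lhs => rw [B.eq_sum_coord ⁅u, v⁆]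
  simp
  ring

lemma Ja_apply (a : ℝ) (u : L) :
    B.Ja (fun _ => a) u = (a * B.e' 0 u) • B.f 0 - (a * B.f' 0 u) • B.e 0 := by
  simp [Ja, e', f', smul_smul, mul_comm, sub_eq_add_neg]

lemma Ja_eq (hl : l ≠ 0) (a : ℝ) :
    B.Ja (fun _ => a) = (a / l) • (LieAlgebra.ad ℝ L B.em : L →ₗ[ℝ] L) := by
  apply B.ext_basis <;> simp [Ja_apply, smul_smul, hl]

lemma smul_e_add_smul_f_mem_S (s t : ℝ) : s • B.e 0 + t • B.f 0 ∈ B.S :=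
  add_mem (Submodule.smul_mem _ _ (Submodule.subset_span (Or.inl ⟨0, rfl⟩)))
    (Submodule.smul_mem _ _ (Submodule.subset_span (Or.inr ⟨0, rfl⟩)))

def biv (a b c d e f : ℝ) : Dual ℝ L →ₗ[ℝ] L :=
  a • wedge B.em B.e0 + b • wedge B.em (B.e 0) + c • wedge B.em (B.f 0)
    + d • wedge B.e0 (B.e 0) + e • wedge B.e0 (B.f 0) + f • wedge (B.e 0) (B.f 0)

variable {a b c d e f : ℝ}

@[simp] lemma biv_em' : B.biv a b c d e f B.em' = a • B.e0 + b • B.e 0 + c • B.f 0 := by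
  simp [biv]
@[simp] lemma biv_e0' : B.biv a b c d e f B.e0' = -a • B.em + d • B.e 0 + e • B.f 0 := by
  simp [biv]
@[simp] lemma biv_e' : B.biv a b c d e f (B.e' 0) = -b • B.em - d • B.e0 + f • B.f 0 := by
  simp [biv]; module
@[simp] lemma biv_f' : B.biv a b c d e f (B.f' 0) = -c • B.em - e • B.e0 - f • B.e 0 := by
  simp [biv]; module

lemma isBivector_biv : IsBivector (B.biv a b c d e f) := by
  intro α β
  simp [biv]
  ring

lemma _root_.IsBivector.exists_eq_biv {r : Dual ℝ L →ₗ[ℝ] L} (hr : IsBivector r) :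
    ∃ a b c d e f : ℝ, r = B.biv a b c d e f := by
  refine ⟨B.e0' (r B.em'), B.e' 0 (r B.em'), B.f' 0 (r B.em'), B.e' 0 (r B.e0'),
    B.f' 0 (r B.e0'), B.f' 0 (r (B.e' 0)), ?_⟩
  have diag : ∀ α : Dual ℝ L, α (r α) = 0 := fun α => by linarith [hr α α]
  apply B.ext_dual <;> apply B.ext_coord <;>
    simp [diag, hr B.em' B.e0', hr B.em' (B.e' 0), hr B.em' (B.f' 0), hr B.e0' (B.e' 0),
      hr B.e0' (B.f' 0), hr (B.e' 0) (B.f' 0)]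

lemma biv_eq_biv_iff {a' b' c' d' e' f' : ℝ} :
    B.biv a b c d e f = B.biv a' b' c' d' e' f' ↔
      a = a' ∧ b = b' ∧ c = c' ∧ d = d' ∧ e = e' ∧ f = f' := by
  constructor
  · intro h
    have h₁ := congr(B.e0' ($h B.em'))
    have h₂ := congr(B.e' 0 ($h B.em'))
    have h₃ := congr(B.f' 0 ($h B.em'))
    have h₄ := congr(B.e' 0 ($h B.e0'))
    have h₅ := congr(B.f' 0 ($h B.e0'))
    have h₆ := congr(B.f' 0 ($h (B.e' 0)))
    simp at h₁ h₂ h₃ h₄ h₅ h₆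
    exact ⟨h₁, h₂, h₃, h₄, h₅, h₆⟩
  · rintro ⟨rfl, rfl, rfl, rfl, rfl, rfl⟩
    rfl

lemma biv_zero : B.biv 0 0 0 0 0 0 = 0 := by simp [biv]

lemma smul_biv (t : ℝ) :
    t • B.biv a b c d e f = B.biv (t * a) (t * b) (t * c) (t * d) (t * e) (t * f) := by
  simp only [biv, smul_add, smul_smul]

lemma biv_sub_biv {a' b' c' d' e' f' : ℝ} :
    B.biv a b c d e f - B.biv a' b' c' d' e' f'
      = B.biv (a - a') (b - b') (c - c') (d - d') (e - e') (f - f') := by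
  simp only [biv, sub_smul]
  abel

lemma adDag_em_biv :
    adDag B.em (B.biv a b c d e f) = B.biv 0 (-(l * c)) (l * b) (-(l * e)) (l * d) 0 := by
  apply B.ext_dual <;> simp [adDag_apply, lie_add, lie_sub, lie_smul] <;> module

lemma adDag_e_biv :
    adDag (B.e 0) (B.biv a b c d e f) = B.biv c 0 0 (-f) (l * a) (l * b) := by
  apply B.ext_dual <;> simp [adDag_apply, lie_add, lie_sub, lie_smul] <;> module

lemma adDag_f_biv :
    adDag (B.f 0) (B.biv a b c d e f) = B.biv (-b) 0 0 (-(l * a)) (-f) (l * c) := by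
  apply B.ext_dual <;> simp [adDag_apply, lie_add, lie_sub, lie_smul] <;> module

lemma adDag_e0 (r : Dual ℝ L →ₗ[ℝ] L) : adDag B.e0 r = 0 := by
  ext α; simp [adDag_apply]

lemma _root_.IsBivector.eq_zero_of_adDag (hl : l ≠ 0) {r : Dual ℝ L →ₗ[ℝ] L}
    (hr : IsBivector r) (hm : adDag B.em r = 0) (he : adDag (B.e 0) r = 0) : r = 0 := by
  obtain ⟨a, b, c, d, e, f, rfl⟩ := hr.exists_eq_biv B
  rw [adDag_em_biv, ← biv_zero, biv_eq_biv_iff] at hm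
  rw [adDag_e_biv, ← biv_zero, biv_eq_biv_iff] at he
  simp only [neg_eq_zero, mul_eq_zero, hl, false_or] at hm he
  rw [← biv_zero, biv_eq_biv_iff]
  tauto

end

theorem exists_eq_coboundary (B : OscAlg 1 (fun _ => l) L) (hl : l ≠ 0)
    {ξ : L →ₗ[ℝ] Dual ℝ L →ₗ[ℝ] L} (hbiv : ∀ u, IsBivector (ξ u)) (hξ : IsCocycle ξ) :
    ∃ r, IsBivector r ∧ ξ = coboundary r := by
  have hinv : ∀ u, adDag u (ξ B.e0) = 0 := fun u => by
    simpa [adDag_e0] using hξ B.e0 u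
  have h0 : ξ B.e0 = 0 := (hbiv _).eq_zero_of_adDag B hl (hinv _) (hinv _)
  obtain ⟨M₁, M₂, M₃, M₄, M₅, M₆, hM⟩ := (hbiv B.em).exists_eq_biv B
  obtain ⟨X₁, X₂, X₃, X₄, X₅, X₆, hX⟩ := (hbiv (B.e 0)).exists_eq_biv B
  obtain ⟨Y₁, Y₂, Y₃, Y₄, Y₅, Y₆, hY⟩ := (hbiv (B.f 0)).exists_eq_biv B
  have hmx := hξ B.em (B.e 0)
  rw [em_lie_e, map_smul, hM, hX, hY, adDag_em_biv, adDag_e_biv, smul_biv, biv_sub_biv,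
    biv_eq_biv_iff] at hmx
  have hmy := hξ B.em (B.f 0)
  rw [em_lie_f, map_smul, hM, hX, hY, adDag_em_biv, adDag_f_biv, smul_biv, biv_sub_biv,
    biv_eq_biv_iff] at hmy
  have hxy := hξ (B.e 0) (B.f 0)
  rw [e_lie_f, h0, eq_comm, sub_eq_zero, hX, hY, adDag_e_biv, adDag_f_biv,
    biv_eq_biv_iff] at hxy
  obtain ⟨mx₁, mx₂, mx₃, mx₄, mx₅, mx₆⟩ := hmx
  obtain ⟨my₁, my₂, my₃, my₄, my₅, my₆⟩ := hmy
  obtain ⟨xy₁, -, -, xy₄, xy₅, xy₆⟩ := hxy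
  have hM₁ : M₁ = 0 := mul_left_cancel₀ hl (by linarith)
  have hM₆ : M₆ = 0 := by linarith
  have hX₂ : X₂ = 0 := mul_left_cancel₀ hl (by linear_combination (-1/2) * mx₃ + (l/2) * xy₁)
  have hX₃ : X₃ = 0 := mul_left_cancel₀ hl (by linarith)
  have hY₂ : Y₂ = 0 := mul_left_cancel₀ hl (by linarith)
  have hY₃ : Y₃ = 0 := by linarith
  have hY₄ : Y₄ = -X₅ := mul_left_cancel₀ hl (by linarith)
  have hY₅ : Y₅ = X₄ := mul_left_cancel₀ hl (by linarith)
  have hY₆ : Y₆ = -M₂ := mul_left_cancel₀ hl (by linarith)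
  have hX₆ : X₆ = M₃ := mul_left_cancel₀ hl (by linarith)
  have hX₁ : X₁ = -M₂ / l := by field_simp; linarith
  have hY₁ : Y₁ = -M₃ / l := by field_simp; linarith
  subst M₁ M₆ X₁ X₂ X₃ X₆ Y₁ Y₂ Y₃ Y₄ Y₅ Y₆
  -- `r` is read off from `ξ(e₋₁) = ad_{e₋₁}† r` and `ξ(e₁) = ad_{e₁}† r`
  refine ⟨B.biv (X₅ / l) (M₃ / l) (-M₂ / l) (M₅ / l) (-M₄ / l) (-X₄), B.isBivector_biv,
    B.ext_basis ?_ ?_ ?_ ?_⟩ <;>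
    simp only [coboundary_apply, hM, hX, hY, h0, adDag_em_biv, adDag_e_biv, adDag_f_biv,
      adDag_e0, biv_eq_biv_iff] <;>
    field_simp <;> simp

variable (B : OscAlg 1 (fun _ => l) L) {a b c d e f : ℝ}

lemma schouten_biv_em'_e'_f' :
    schouten (B.biv a b c d e f) B.em' (B.e' 0) (B.f' 0) = 2 * l * (b ^ 2 + c ^ 2) := by
  simp [schouten, lie_add, lie_sub, lie_smul, add_lie, sub_lie, smul_lie]
  ring

lemma schouten_biv_e0'_e'_f' :
    schouten (B.biv a 0 0 d e f) B.e0' (B.e' 0) (B.f' 0) = 2 * f ^ 2 := by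
  simp [schouten, lie_add, lie_sub, lie_smul, add_lie, sub_lie, smul_lie]
  ring

lemma _root_.IsGCYBE.schouten_em'_e'_f' {r : Dual ℝ L →ₗ[ℝ] L} (hg : IsGCYBE r) :
    schouten r B.em' (B.e' 0) (B.f' 0) = 0 := by
  have h := hg (B.e 0) B.em' B.e0' (B.e' 0)
  simp [schouten] at h ⊢
  linear_combination -h

lemma biv_eq_wedge : B.biv a 0 0 d e f
    = wedge B.e0 (-a • B.em + d • B.e 0 + e • B.f 0) + f • wedge (B.e 0) (B.f 0) := by
  apply B.ext_dual <;> simp [sub_eq_add_neg]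

lemma isGCYBE_wedge_e0_add (u : L) (c : ℝ) :
    IsGCYBE (wedge B.e0 u + c • wedge (B.e 0) (B.f 0)) := by
  intro w α β γ
  simp only [schouten, LinearMap.add_apply, LinearMap.smul_apply, wedge_apply, coad_apply,
    lie_add, add_lie, lie_sub, sub_lie, lie_smul, smul_lie, map_add, map_sub, map_smul,
    B.apply_lie _ w, B.apply_lie α, B.apply_lie β, B.apply_lie γ, smul_eq_mul]
  simp
  ring

lemma schouten_biv_em'_e'_f'_eq_zero_iff (hl : l ≠ 0) :
    schouten (B.biv a b c d e f) B.em' (B.e' 0) (B.f' 0) = 0 ↔ b = 0 ∧ c = 0 := by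
  rw [schouten_biv_em'_e'_f', mul_eq_zero, mul_eq_zero,
    add_eq_zero_iff_of_nonneg (sq_nonneg b) (sq_nonneg c)]
  simp [hl]

theorem isGCYBE_iff (hl : l ≠ 0) {r : Dual ℝ L →ₗ[ℝ] L} (hr : IsBivector r) :
    IsGCYBE r ↔ ∃ (c : ℝ) (u : L), r = wedge B.e0 u + c • wedge (B.e 0) (B.f 0) := by
  refine ⟨fun hg => ?_, ?_⟩
  · obtain ⟨a, b, c, d, e, f, rfl⟩ := hr.exists_eq_biv B
    obtain ⟨rfl, rfl⟩ := (B.schouten_biv_em'_e'_f'_eq_zero_iff hl).1 (hg.schouten_em'_e'_f' B)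
    exact ⟨f, _, B.biv_eq_wedge⟩
  · rintro ⟨c, u, rfl⟩
    exact B.isGCYBE_wedge_e0_add u c

theorem isCYBE_iff (hl : l ≠ 0) {r : Dual ℝ L →ₗ[ℝ] L} (hr : IsBivector r) :
    IsCYBE r ↔ ∃ u : L, r = wedge B.e0 u := by
  refine ⟨fun hc => ?_, ?_⟩
  · obtain ⟨a, b, c, d, e, f, rfl⟩ := hr.exists_eq_biv B
    obtain ⟨rfl, rfl⟩ := (B.schouten_biv_em'_e'_f'_eq_zero_iff hl).1 (hc _ _ _)
    have hf : f = 0 := by simpa [B.schouten_biv_e0'_e'_f'] using hc B.e0' (B.e' 0) (B.f' 0)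
    exact ⟨_, by rw [B.biv_eq_wedge, hf, zero_smul, add_zero]⟩
  · rintro ⟨u, rfl⟩
    exact isCYBE_wedge_of_forall_lie_eq_zero B.e0_lie u

lemma wedge_e0_Ja_add_ad (hl : l ≠ 0) (a : ℝ) (u₀ u : L) :
    wedge B.e0 ((B.Ja (fun _ => a) + (LieAlgebra.ad ℝ L u₀ : L →ₗ[ℝ] L)) u)
      = adDag u (wedge B.e0 (-((a / l) • B.em + u₀))) := by
  have hD : (B.Ja (fun _ => a) + (LieAlgebra.ad ℝ L u₀ : L →ₗ[ℝ] L)) u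
      = ⁅u, -((a / l) • B.em + u₀)⁆ := by
    rw [lie_neg, lie_add, lie_smul, ← lie_skew u B.em, ← lie_skew u u₀, B.Ja_eq hl]
    simp only [LinearMap.add_apply, LinearMap.smul_apply, LieAlgebra.ad_apply]
    module
  rw [adDag_wedge, lie_e0, hD]
  ext α
  simp

lemma wedge_e0_congr {v w : L} (h₁ : B.em' v = B.em' w) (h₃ : B.e' 0 v = B.e' 0 w)
    (h₄ : B.f' 0 v = B.f' 0 w) : wedge B.e0 v = wedge B.e0 w := by
  have hv : v = w + (B.e0' v - B.e0' w) • B.e0 := B.ext_coord (by simp [h₁]) (by simp)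
    (by simp [h₃]) (by simp [h₄])
  ext α
  rw [hv]
  simp
  module

theorem isBialgebra_iff (hl : l ≠ 0) (ξ : L →ₗ[ℝ] (Dual ℝ L →ₗ[ℝ] L)) :
    IsBialgebra ξ ↔
      ∃ (a c : ℝ) (u₀ : L), u₀ ∈ B.S ∧
        ∀ u : L, ξ u = c • adDag u (wedge (B.e 0) (B.f 0))
          + wedge B.e0 ((B.Ja (fun _ => a) + (LieAlgebra.ad ℝ L u₀ : L →ₗ[ℝ] L)) u) := by
  constructor
  · intro hξ
    obtain ⟨r, hr, rfl⟩ := B.exists_eq_coboundary hl hξ.1 hξ.2.1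
    obtain ⟨c, v, rfl⟩ := (B.isGCYBE_iff hl hr).1 (hr.isBialgebra_coboundary_iff.1 hξ)
    refine ⟨-(l * B.em' v), c, -(B.e' 0 v • B.e 0 + B.f' 0 v • B.f 0),
      neg_mem (B.smul_e_add_smul_f_mem_S _ _), fun u => ?_⟩
    rw [B.wedge_e0_Ja_add_ad hl, coboundary_apply, adDag_add, adDag_smul, add_comm]
    congr 2
    exact B.wedge_e0_congr (by simp; field_simp) (by simp) (by simp)
  · rintro ⟨a, c, u₀, -, hξ⟩
    set r := wedge B.e0 (-((a / l) • B.em + u₀)) + c • wedge (B.e 0) (B.f 0)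
    have hr : IsBivector r := (isBivector_wedge _ _).add ((isBivector_wedge _ _).smul c)
    have hcob : ξ = coboundary r := by
      ext1 u
      rw [hξ, coboundary_apply, adDag_add, adDag_smul, B.wedge_e0_Ja_add_ad hl, add_comm]
    rw [hcob, hr.isBialgebra_coboundary_iff]
    exact B.isGCYBE_wedge_e0_add _ c

end OscAlg

/-- **Proposition (dimension 4).** On the 4-dimensional oscillator Lie algebra `𝔤_λ`
(`λ > 0`): (1) `ξ` is a Lie bialgebra structure iff
`ξ(u) = α ad_u†(e₁∧ě₁) + e₀ ∧ ((J_a + ad_{u₀})(u))` for some `a, α ∈ ℝ`, `u₀ ∈ S`;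
(2) `r` solves the generalized classical Yang–Baxter equation iff
`r = e₀∧u + α e₁∧ě₁`; (3) `r` solves the classical Yang–Baxter equation iff
`r = e₀∧u`. -/
theorem oscillator_dim4_classification
    {l : ℝ} (hl : 0 < l)
    {L : Type} [LieRing L] [LieAlgebra ℝ L] (B : OscAlg 1 (fun _ => l) L) :
    (∀ ξ : L →ₗ[ℝ] (Dual ℝ L →ₗ[ℝ] L),
      IsBialgebra ξ ↔
        ∃ (a c : ℝ) (u₀ : L), u₀ ∈ B.S ∧
          ∀ u : L,
            ξ u = c • adDag u (wedge (B.e 0) (B.f 0))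
              + wedge B.e0 ((B.Ja (fun _ => a) + (LieAlgebra.ad ℝ L u₀ : L →ₗ[ℝ] L)) u)) ∧
    (∀ r : Dual ℝ L →ₗ[ℝ] L, IsBivector r →
      (IsGCYBE r ↔ ∃ (c : ℝ) (u : L), r = wedge B.e0 u + c • wedge (B.e 0) (B.f 0))) ∧
    (∀ r : Dual ℝ L →ₗ[ℝ] L, IsBivector r →
      (IsCYBE r ↔ ∃ u : L, r = wedge B.e0 u)) :=
  ⟨B.isBialgebra_iff hl.ne', fun _ hr => B.isGCYBE_iff hl.ne' hr,
    fun _ hr => B.isCYBE_iff hl.ne' hr⟩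
end
end

section
/- Let λ = (λ₁, λ₂) with 0 < λ₁ < λ₂ and let 𝔤_λ be the associated 6-dimensional oscillator Lie algebra. Then for every solution r ∈ ⋀²𝔤_λ of the classical Yang–Baxter equation, the dual Lie algebra (𝔤_λ*, [·,·]_r) is unimodular, i.e. for every α ∈ 𝔤_λ* the trace of the map β ↦ [α,β]_r vanishes. -/
open Module LinearMap

noncomputable section

attribute [local instance 100] LieRing.ofAssociativeRing

/-- The operator `β ↦ [α,β]_r = ad*_{r_#(β)} α − ad*_{r_#(α)} β` on `𝔤*`, as a linear
map, for a solution `r` of the classical Yang–Baxter equation. -/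
def rBrMap {L : Type} [LieRing L] [LieAlgebra ℝ L]
    (r : Dual ℝ L →ₗ[ℝ] L) (α : Dual ℝ L) : Dual ℝ L →ₗ[ℝ] Dual ℝ L :=
  (LinearMap.llcomp ℝ L L ℝ (α : L →ₗ[ℝ] ℝ)) ∘ₗ (LieAlgebra.ad ℝ L).toLinearMap ∘ₗ r
    - (LieAlgebra.ad ℝ L (r α)).dualMap

/-!
For any bivector `r` and any basis `(bᵢ)` with dual basis `(bⁱ)`, the trace of `[α,·]_r` is
`α(Z) - tr ad_{r_#α}`, where `Z = ∑ᵢ [r_#(bⁱ), bᵢ]`. The oscillator algebra is unimodular,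
so it suffices to show `Z = 0`. In the oscillator basis `Z` has components `2λₖ ěₖ*(r_# e₋₁*)`
along `eₖ`, `-2λₖ eₖ*(r_# e₋₁*)` along `ěₖ`, and `2 ∑ₖ eₖ*(r_# ěₖ*)` along `e₀`. The
Yang–Baxter equation at `(e₋₁*, eₖ*, ěₖ*)` reads `λₖ (eₖ*(r_# e₋₁*)² + ěₖ*(r_# e₋₁*)²) = 0`,
which kills the first two components as `λₖ ≠ 0`. For `n = 2` the six equations with first
argument `e₀*` force `t = ∑ₖ eₖ*(r_# ěₖ*)` to vanish: if `t ≠ 0`, they are linear in the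
remaining coordinates of `r` on `span {eₖ, ěₖ}`, with invertible coefficient matrices of the
form `[[t, s], [-s, t]]`, so those coordinates vanish, and then the first two equations give
`t = 0` after all.
-/

theorem LinearMap.trace_eq_sum_coord {R M ι : Type*} [CommRing R] [AddCommGroup M] [Module R M]
    [Fintype ι] (b : Basis ι R M) (f : M →ₗ[R] M) :
    trace R M f = ∑ i, b.coord i (f (b i)) := by
  classical
  simp [trace_eq_matrix_trace R b, Matrix.trace, toMatrix_apply]

theorem Module.Basis.sum_apply_coord_mul_apply {R M N ι : Type*} [CommRing R] [AddCommGroup M]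
    [Module R M] [AddCommGroup N] [Module R N] [Fintype ι] (b : Basis ι R M)
    (r : Dual R M →ₗ[R] N) (φ : N →ₗ[R] R) (ψ : Dual R M) :
    ∑ i, φ (r (b.coord i)) * ψ (b i) = φ (r ψ) := by
  calc ∑ i, φ (r (b.coord i)) * ψ (b i) = φ (r (∑ i, ψ (b i) • b.coord i)) := by
        simp only [map_sum, map_smul, smul_eq_mul, mul_comm]
    _ = φ (r ψ) := by rw [b.sum_dual_apply_smul_coord]

theorem eq_zero_of_rotation_eq_zero {t s x y : ℝ} (ht : t ≠ 0) (h₁ : t * x + s * y = 0)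
    (h₂ : t * y - s * x = 0) : x = 0 ∧ y = 0 := by
  have hpos : t ^ 2 + s ^ 2 ≠ 0 := by positivity
  constructor
  · exact (mul_eq_zero.mp (by linear_combination t * h₁ - s * h₂ : (t ^ 2 + s ^ 2) * x = 0))
      |>.resolve_left hpos
  · exact (mul_eq_zero.mp (by linear_combination s * h₁ + t * h₂ : (t ^ 2 + s ^ 2) * y = 0))
      |>.resolve_left hpos

section LieAlgebra

variable {L : Type} [LieRing L] [LieAlgebra ℝ L]

theorem IsBivector.apply_self {r : Dual ℝ L →ₗ[ℝ] L} (hr : IsBivector r) (α : Dual ℝ L) :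
    α (r α) = 0 := by
  linarith [hr α α]

theorem trace_rBrMap {ι : Type*} [Fintype ι] (b : Basis ι ℝ L) (r : Dual ℝ L →ₗ[ℝ] L)
    (α : Dual ℝ L) :
    trace ℝ (Dual ℝ L) (rBrMap r α)
      = α (∑ i, ⁅r (b.coord i), b i⁆) - trace ℝ L (LieAlgebra.ad ℝ L (r α)) := by
  classical
  rw [trace_eq_sum_coord b.dualBasis, trace_eq_sum_coord b, map_sum, ← Finset.sum_sub_distrib]
  simp [rBrMap, Basis.coe_dualBasis]

theorem apply_lie_eq_of_basis {ι : Type*} (b : Basis ι ℝ L) (φ : Dual ℝ L)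
    (β : L →ₗ[ℝ] L →ₗ[ℝ] ℝ) (h : ∀ i j, φ ⁅b i, b j⁆ = β (b i) (b j)) (x y : L) :
    φ ⁅x, y⁆ = β x y := by
  have := LinearMap.ext_basis b b (B := (LieAlgebra.ad ℝ L).toLinearMap.compr₂ φ) (B' := β)
    (by simpa using h)
  simpa using congr($this x y)

end LieAlgebra

namespace OscAlg

variable {n : ℕ} {lam : Fin n → ℝ} {L : Type} [LieRing L] [LieAlgebra ℝ L] (B : OscAlg n lam L)

attribute [local simp] bracket_em_e bracket_em_f bracket_e_e bracket_f_f bracket_e0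
  Basis.coord_apply Finsupp.single_apply

@[simp] theorem repr_ite_apply (p : Prop) [Decidable p] (v w : L) (k : OscIdx n) :
    B.basis.repr (if p then v else w) k = if p then B.basis.repr v k else B.basis.repr w k := by
  split_ifs <;> rfl

@[simp] theorem lie_e_f (i j : Fin n) :
    ⁅B.basis (Sum.inr (Sum.inl i)), B.basis (Sum.inr (Sum.inr j))⁆
      = (if i = j then (1 : ℝ) else 0) • B.basis (Sum.inl 1) := by
  rw [B.bracket_e_f]
  split_ifs <;> simp

@[simp] theorem lie_e_em (j : Fin n) : ⁅B.basis (Sum.inr (Sum.inl j)), B.basis (Sum.inl 0)⁆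
    = -lam j • B.basis (Sum.inr (Sum.inr j)) := by
  rw [← lie_skew, B.bracket_em_e, neg_smul]

@[simp] theorem lie_f_em (j : Fin n) : ⁅B.basis (Sum.inr (Sum.inr j)), B.basis (Sum.inl 0)⁆
    = lam j • B.basis (Sum.inr (Sum.inl j)) := by
  rw [← lie_skew, B.bracket_em_f, neg_smul, neg_neg]

@[simp] theorem lie_f_e (i j : Fin n) :
    ⁅B.basis (Sum.inr (Sum.inr i)), B.basis (Sum.inr (Sum.inl j))⁆
      = (if j = i then (-1 : ℝ) else 0) • B.basis (Sum.inl 1) := by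
  rw [← lie_skew, lie_e_f]
  split_ifs <;> simp

@[simp] theorem lie_e0_right (x : L) : ⁅x, B.basis (Sum.inl 1)⁆ = 0 := by
  rw [← lie_skew, B.bracket_e0, neg_zero]

theorem em'_lie_s16 (x y : L) : B.em' ⁅x, y⁆ = 0 := by
  refine apply_lie_eq_of_basis B.basis _ 0 (fun i j => ?_) x y
  rcases i with i | i | i <;> rcases j with j | j | j <;> try fin_cases i
  all_goals try fin_cases j
  all_goals simp [em']

theorem e0'_lie_s16 (x y : L) : B.e0' ⁅x, y⁆ = B.om x y := by
  refine apply_lie_eq_of_basis B.basis _ _ (fun i j => ?_) x y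
  rcases i with i | i | i <;> rcases j with j | j | j <;> try fin_cases i
  all_goals try fin_cases j
  all_goals simp [e0', om, e', f'] <;> split_ifs <;> simp_all

theorem e'_lie_s16 (k : Fin n) (x y : L) :
    B.e' k ⁅x, y⁆ = -lam k * (B.em' x * B.f' k y - B.f' k x * B.em' y) := by
  refine apply_lie_eq_of_basis B.basis _
    (-lam k • (B.em'.smulRight (B.f' k) - (B.f' k).smulRight B.em')) (fun i j => ?_) x y
  rcases i with i | i | i <;> rcases j with j | j | j <;> try fin_cases i
  all_goals try fin_cases j
  all_goals simp [em', e', f'] <;> split_ifs <;> simp_all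

theorem f'_lie_s16 (k : Fin n) (x y : L) :
    B.f' k ⁅x, y⁆ = lam k * (B.em' x * B.e' k y - B.e' k x * B.em' y) := by
  refine apply_lie_eq_of_basis B.basis _
    (lam k • (B.em'.smulRight (B.e' k) - (B.e' k).smulRight B.em')) (fun i j => ?_) x y
  rcases i with i | i | i <;> rcases j with j | j | j <;> try fin_cases i
  all_goals try fin_cases j
  all_goals simp [em', e', f'] <;> split_ifs <;> simp_all

theorem trace_ad (B : OscAlg n lam L) (u : L) : trace ℝ L (LieAlgebra.ad ℝ L u) = 0 := by
  rw [trace_eq_sum_coord B.basis]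
  refine Finset.sum_eq_zero fun i _ => ?_
  rw [LieAlgebra.ad_apply]
  rcases i with i | i | i
  · fin_cases i
    · exact B.em'_lie_s16 _ _
    · simp
  · exact (B.e'_lie_s16 i u _).trans (by simp [em', f'])
  · exact (B.f'_lie_s16 i u _).trans (by simp [em', e'])

theorem om_apply (x y : L) :
    B.om x y = ∑ k, (B.e' k x * B.f' k y - B.f' k x * B.e' k y) := by
  simp [om]

theorem sum_lie_basis_eq_zero {r : Dual ℝ L →ₗ[ℝ] L} (hr : IsBivector r)
    (hem : ∀ k, B.e' k (r B.em') = 0 ∧ B.f' k (r B.em') = 0)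
    (htr : ∑ k, B.e' k (r (B.f' k)) = 0) :
    ∑ i, ⁅r (B.basis.coord i), B.basis i⁆ = 0 := by
  refine B.basis.ext_elem fun i => ?_
  rw [map_zero, Finsupp.zero_apply]
  change B.basis.coord i _ = 0
  rcases i with i | i | i
  · fin_cases i
    · change B.em' _ = 0
      rw [map_sum]
      exact Finset.sum_eq_zero fun j _ => B.em'_lie_s16 _ _
    · change B.e0' _ = 0
      simp only [map_sum, e0'_lie_s16, om_apply, Finset.sum_sub_distrib,
        Finset.sum_comm (s := (Finset.univ : Finset (OscIdx n))) (t := Finset.univ),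
        Basis.sum_apply_coord_mul_apply, fun k => hr (B.f' k) (B.e' k), Finset.sum_neg_distrib, htr]
      norm_num
  · change B.e' i _ = 0
    simp only [map_sum, e'_lie_s16, mul_sub, Finset.sum_sub_distrib, ← Finset.mul_sum,
      Basis.sum_apply_coord_mul_apply, hr B.em' (B.f' i), (hem i).2]
    ring
  · change B.f' i _ = 0
    simp only [map_sum, f'_lie_s16, mul_sub, Finset.sum_sub_distrib, ← Finset.mul_sum,
      Basis.sum_apply_coord_mul_apply, hr B.em' (B.e' i), (hem i).1]
    ring

theorem coord_r_em'_eq_zero_of_isCYBE {r : Dual ℝ L →ₗ[ℝ] L} (hr : IsBivector r) (hcybe : IsCYBE r)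
    {k : Fin n} (hk : lam k ≠ 0) : B.e' k (r B.em') = 0 ∧ B.f' k (r B.em') = 0 := by
  have h := hcybe B.em' (B.e' k) (B.f' k)
  simp only [schouten, em'_lie_s16, e'_lie_s16, f'_lie_s16, hr B.em' (B.e' k), hr B.em' (B.f' k),
    hr.apply_self] at h
  have hsq : lam k * ((B.e' k (r B.em')) ^ 2 + (B.f' k (r B.em')) ^ 2) = 0 := by
    linear_combination h / 2
  have := (mul_eq_zero.mp hsq).resolve_left hk
  constructor <;> nlinarith [sq_nonneg (B.e' k (r B.em')), sq_nonneg (B.f' k (r B.em'))]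

theorem add_eq_zero_of_dim6_cybe_system {l₀ l₁ c a p d g q k : ℝ}
    (hE₀ : p ^ 2 + a * k + d * g = 0) (hE₁ : q ^ 2 + a * k + d * g = 0)
    (hA : a * (p + q) + c * (l₀ * g - l₁ * d) = 0) (hB : d * (p + q) + c * (l₁ * a - l₀ * k) = 0)
    (hC : g * (p + q) + c * (l₁ * k - l₀ * a) = 0) (hD : k * (p + q) + c * (l₀ * d - l₁ * g) = 0) :
    p + q = 0 := by
  by_contra ht
  obtain ⟨hak, hdg⟩ := eq_zero_of_rotation_eq_zero ht (s := c * (l₀ - l₁)) (x := a + k)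
    (y := d + g) (by linear_combination hA + hD) (by linear_combination hB + hC)
  obtain ⟨hak', hdg'⟩ := eq_zero_of_rotation_eq_zero ht (s := c * (l₀ + l₁)) (x := a - k)
    (y := g - d) (by linear_combination hA - hD) (by linear_combination hC - hB)
  have ha : a = 0 := by linarith
  have hd : d = 0 := by linarith
  have hp : p = 0 := by simpa [ha, hd] using hE₀
  have hq : q = 0 := by simpa [ha, hd] using hE₁
  exact ht (by rw [hp, hq, add_zero])

theorem sum_e'_r_f'_eq_zero_of_isCYBE {lam : Fin 2 → ℝ} (B : OscAlg 2 lam L) {r : Dual ℝ L →ₗ[ℝ] L}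
    (hr : IsBivector r) (hcybe : IsCYBE r) (hl₀ : lam 0 ≠ 0) (hl₁ : lam 1 ≠ 0) :
    ∑ k, B.e' k (r (B.f' k)) = 0 := by
  obtain ⟨h₀e, h₀f⟩ := B.coord_r_em'_eq_zero_of_isCYBE hr hcybe hl₀
  obtain ⟨h₁e, h₁f⟩ := B.coord_r_em'_eq_zero_of_isCYBE hr hcybe hl₁
  have hE₀ := hcybe B.e0' (B.e' 0) (B.f' 0)
  have hE₁ := hcybe B.e0' (B.e' 1) (B.f' 1)
  have hA := hcybe B.e0' (B.e' 0) (B.e' 1)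
  have hB := hcybe B.e0' (B.e' 0) (B.f' 1)
  have hC := hcybe B.e0' (B.e' 1) (B.f' 0)
  have hD := hcybe B.e0' (B.f' 0) (B.f' 1)
  simp only [schouten, e0'_lie_s16, om_apply, Fin.sum_univ_two, e'_lie_s16, f'_lie_s16, hr.apply_self,
    hr B.em' (B.e' 0), hr B.em' (B.e' 1), hr B.em' (B.f' 0), hr B.em' (B.f' 1), hr B.em' B.e0',
    hr (B.f' 0) (B.e' 0), hr (B.e' 1) (B.e' 0), hr (B.f' 1) (B.e' 0), hr (B.f' 0) (B.e' 1),
    hr (B.f' 1) (B.e' 1), hr (B.f' 1) (B.f' 0), h₀e, h₀f, h₁e, h₁f] at hE₀ hE₁ hA hB hC hD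
  rw [Fin.sum_univ_two]
  exact add_eq_zero_of_dim6_cybe_system (l₀ := lam 0) (l₁ := lam 1) (c := B.e0' (r B.em'))
    (a := B.e' 0 (r (B.e' 1))) (d := B.e' 0 (r (B.f' 1))) (g := B.e' 1 (r (B.f' 0)))
    (k := B.f' 0 (r (B.f' 1)))
    (by linear_combination hE₀ / 2) (by linear_combination hE₁ / 2) (by linear_combination hA / 2)
    (by linear_combination hB / 2) (by linear_combination hC / 2) (by linear_combination hD / 2)

end OscAlg

/-- **Proposition.** On the 6-dimensional oscillator Lie algebra `𝔤_λ`
(`0 < λ₁ < λ₂`), for every solution `r` of the classical Yang–Baxter equation the dual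
Lie algebra `(𝔤_λ*, [·,·]_r)` is unimodular. -/
theorem oscillator_dim6_dual_unimodular
    {lam : Fin 2 → ℝ} (hlam : 0 < lam 0 ∧ lam 0 < lam 1)
    {L : Type} [LieRing L] [LieAlgebra ℝ L] (B : OscAlg 2 lam L)
    (r : Dual ℝ L →ₗ[ℝ] L) (hr : IsBivector r) (hcybe : IsCYBE r) :
    ∀ α : Dual ℝ L, LinearMap.trace ℝ (Dual ℝ L) (rBrMap r α) = 0 := by
  intro α
  have hl₀ : lam 0 ≠ 0 := hlam.1.ne'
  have hl₁ : lam 1 ≠ 0 := (hlam.1.trans hlam.2).ne'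
  have hem : ∀ k, B.e' k (r B.em') = 0 ∧ B.f' k (r B.em') = 0 :=
    Fin.forall_fin_two.mpr ⟨B.coord_r_em'_eq_zero_of_isCYBE hr hcybe hl₀, B.coord_r_em'_eq_zero_of_isCYBE hr hcybe hl₁⟩
  rw [trace_rBrMap B.basis, B.sum_lie_basis_eq_zero hr hem (B.sum_e'_r_f'_eq_zero_of_isCYBE hr hcybe hl₀ hl₁),
    map_zero, B.trace_ad, sub_zero]
end
end
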